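/- There exists p₀ > 0 such that for every p ∈ (0, p₀), the cubic polynomial χ_p(λ) = λ³ + (5 + 5p − 2p²)·λ² + (8 + 14p − 2p²)·λ + (4 + 12p − 20p² + 28p³ − 8p⁴) has three distinct real roots, all of which are negative. -/
import Mathlib


/-- The characteristic polynomial `χ_p(λ)` of the coefficient matrix of the linearized
system governing the run-probabilities `P₀, P₁, P₂` in the slow-convergence analysis. -/
def chiPoly (p lam : ℝ) : ℝ :=
  lam ^ 3 + (5 + 5 * p - 2 * p ^ 2) * lam ^ 2 + (8 + 14 * p - 2 * p ^ 2) * lam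
    + (4 + 12 * p - 20 * p ^ 2 + 28 * p ^ 3 - 8 * p ^ 4)

lemma chiPoly_continuous (p : ℝ) : Continuous fun lam => chiPoly p lam := by
  unfold chiPoly; continuity

set_option maxHeartbeats 1000000 in
/-- There is a `p₀ > 0` such that for every `p ∈ (0, p₀)` the cubic `χ_p` has three
distinct real roots, all negative. -/
theorem chiPoly_three_negative_roots :
    ∃ p₀ : ℝ, 0 < p₀ ∧ ∀ p : ℝ, p ∈ Set.Ioo (0 : ℝ) p₀ →
      ∃ r₁ r₂ r₃ : ℝ, r₁ ≠ r₂ ∧ r₁ ≠ r₃ ∧ r₂ ≠ r₃ ∧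
        r₁ < 0 ∧ r₂ < 0 ∧ r₃ < 0 ∧
        ∀ lam : ℝ, chiPoly p lam = (lam - r₁) * (lam - r₂) * (lam - r₃) := by
  refine ⟨1/10000, by norm_num, fun p hp => ?_⟩
  obtain ⟨hp0, hp1⟩ := hp
  set t := Real.sqrt p with ht_def
  have ht0 : 0 < t := Real.sqrt_pos.mpr hp0
  have ht2 : t ^ 2 = p := Real.sq_sqrt hp0.le
  have ht : t < 1/100 := by
    nlinarith [ht2, hp1, ht0]
  have hp1' : p < 1/10000 := hp1
  -- sign values
  have hA : chiPoly p (-2 - 3*t) < 0 := by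
    have h : chiPoly p (-2 - 3*t)
        = t^2 * (-5 - 9*t + 21*t^2 - 18*t^3 + 10*t^4 - 8*t^6) := by
      rw [← ht2]; unfold chiPoly; ring
    rw [h]
    have h1 : -5 - 9*t + 21*t^2 - 18*t^3 + 10*t^4 - 8*t^6 < 0 := by
      nlinarith [pow_pos ht0 2, pow_pos ht0 4, pow_pos ht0 6, pow_pos ht0 3]
    nlinarith [pow_pos ht0 2]
  have hB : 0 < chiPoly p (-2) := by
    have h : chiPoly p (-2) = 4*p - 24*p^2 + 28*p^3 - 8*p^4 := by unfold chiPoly; ring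
    rw [h]
    have h2 : p^2 < p * (1/10000) := by nlinarith
    have h3 : p^4 < p^3 := by nlinarith [pow_pos hp0 3]
    have h4 : p^3 < p^2 := by nlinarith [pow_pos hp0 2]
    nlinarith [pow_pos hp0 3]
  have hC : chiPoly p (-2 + 3*t) < 0 := by
    have h : chiPoly p (-2 + 3*t)
        = t^2 * (-5 + 9*t + 21*t^2 + 18*t^3 + 10*t^4 - 8*t^6) := by
      rw [← ht2]; unfold chiPoly; ring
    rw [h]
    have h1 : -5 + 9*t + 21*t^2 + 18*t^3 + 10*t^4 - 8*t^6 < 0 := by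
      nlinarith [pow_pos ht0 2, pow_pos ht0 4, pow_pos ht0 6, pow_pos ht0 3]
    nlinarith [pow_pos ht0 2]
  -- first root in (-2-3t, -2)
  have hsub : Set.Ioo (chiPoly p (-2 - 3*t)) (chiPoly p (-2)) ⊆
      (fun lam => chiPoly p lam) '' Set.Ioo (-2 - 3*t) (-2) :=
    intermediate_value_Ioo (by linarith) (chiPoly_continuous p).continuousOn
  obtain ⟨r₁, hr₁mem, hr₁⟩ := hsub ⟨hA, hB⟩
  -- second root in (-2, -2+3t)
  have hsub2 : Set.Ioo (chiPoly p (-2 + 3*t)) (chiPoly p (-2)) ⊆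
      (fun lam => chiPoly p lam) '' Set.Ioo (-2) (-2 + 3*t) :=
    intermediate_value_Ioo' (by linarith) (chiPoly_continuous p).continuousOn
  obtain ⟨r₂, hr₂mem, hr₂⟩ := hsub2 ⟨hC, hB⟩
  obtain ⟨hr₁l, hr₁u⟩ := hr₁mem
  obtain ⟨hr₂l, hr₂u⟩ := hr₂mem
  simp only at hr₁ hr₂
  unfold chiPoly at hr₁ hr₂
  set s : ℝ := -(5 + 5*p - 2*p^2) - r₁ - r₂ with hs_def
  have hne : r₁ ≠ r₂ := by intro h; rw [h] at hr₁u; linarith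
  have hsub12 : r₁ - r₂ ≠ 0 := sub_ne_zero.mpr hne
  -- the two linear coefficients of χ - (λ-r₁)(λ-r₂)(λ-s) vanish
  have e1 : ((8 + 14*p - 2*p^2) - (r₁*r₂ + r₁*s + r₂*s)) * r₁
      + ((4 + 12*p - 20*p^2 + 28*p^3 - 8*p^4) + r₁*r₂*s) = 0 := by
    rw [hs_def]; linear_combination hr₁
  have e2 : ((8 + 14*p - 2*p^2) - (r₁*r₂ + r₁*s + r₂*s)) * r₂
      + ((4 + 12*p - 20*p^2 + 28*p^3 - 8*p^4) + r₁*r₂*s) = 0 := by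
    rw [hs_def]; linear_combination hr₂
  have ha : (8 + 14*p - 2*p^2) - (r₁*r₂ + r₁*s + r₂*s) = 0 := by
    have h := sub_eq_zero.mpr (e1.trans e2.symm)
    have h' : ((8 + 14*p - 2*p^2) - (r₁*r₂ + r₁*s + r₂*s)) * (r₁ - r₂) = 0 := by
      linear_combination h
    rcases mul_eq_zero.mp h' with h'' | h''
    · exact h''
    · exact absurd h'' hsub12
  have hb : (4 + 12*p - 20*p^2 + 28*p^3 - 8*p^4) + r₁*r₂*s = 0 := by
    linear_combination e1 - r₁ * ha
  clear hr₁ hr₂ e1 e2 hA hB hC hsub hsub2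
  -- bounds on s
  have hs_lb : -1 - 5*p - 3*t < s := by rw [hs_def]; nlinarith [sq_nonneg p]
  have hs_ub : s < -1 + 3*t - 5*p + 2*p^2 := by rw [hs_def]; nlinarith
  have hs_neg : s < 0 := by nlinarith
  have hr₂s : r₂ < s := by nlinarith
  refine ⟨r₁, r₂, s, hne, by intro h; rw [h] at hr₁u; nlinarith, ne_of_lt hr₂s,
    by linarith, by linarith, hs_neg, fun lam => ?_⟩
  rw [hs_def] at ha hb ⊢
  unfold chiPoly
  linear_combination lam * ha + hb
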